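/- arXiv:1703.08323 — 3 statements merged into one kernel-verified Lean document; each statement's English description precedes it below -/
import Mathlib

section
/- For every a ∈ H and every 𝐘 ∈ (ℂ^×)^{2r} one has the matrix identity x̄(a;𝐘) = Φ_H(a;𝐘) · x_{j_r}(Φ_{1,j_r}(𝐘)) x_{j_{r−1}}(Φ_{1,j_{r−1}}(𝐘)) ⋯ x_{j_1}(Φ_{1,j_1}(𝐘)) · x_{j_r}(Φ_{2,j_r}(𝐘)) x_{j_{r−1}}(Φ_{2,j_{r−1}}(𝐘)) ⋯ x_{j_1}(Φ_{2,j_1}(𝐘)); that is, x̄ = x^G_𝐢 ∘ φ, where x^G_𝐢(a;t_1,…,t_{2r}) = a·x_{j_{2r}}(t_1)x_{j_{2r−1}}(t_2)⋯x_{j_1}(t_{2r}). -/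
open scoped BigOperators

namespace DBC

/-- The k-th letter (from the right) of the reduced word 𝐢 of c². -/
def jIdx (r k : ℕ) : ℕ :=
  let k' := if r < k then k - r else k
  let h := (r + 1) / 2
  if k' ≤ h then (2 * h - 1) - 2 * (k' - 1) else 2 * (r / 2) - 2 * (k' - h - 1)

abbrev Mat (r : ℕ) (R : Type _) := Matrix (Fin (r + 1)) (Fin (r + 1)) R

variable {R : Type _}

open Fin.NatCast in
/-- `x_i(t) = 1 + t E_{i,i+1}` (1-indexed `i`). -/
def xm [CommRing R] (r i : ℕ) (t : R) : Mat r R :=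
  1 + Matrix.single ((i - 1 : ℕ) : Fin (r + 1)) ((i : ℕ) : Fin (r + 1)) t

open Fin.NatCast in
/-- `y_i(t) = 1 + t E_{i+1,i}` (1-indexed `i`). -/
def ym [CommRing R] (r i : ℕ) (t : R) : Mat r R :=
  1 + Matrix.single ((i : ℕ) : Fin (r + 1)) ((i - 1 : ℕ) : Fin (r + 1)) t

/-- `α_i^∨(t)` (1-indexed `i`). -/
def alm [Field R] (r i : ℕ) (t : R) : Mat r R :=
  Matrix.diagonal (fun m => if (m : ℕ) = i - 1 then t else if (m : ℕ) = i then t⁻¹ else 1)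

/-- `Y_{s,j}` with the out-of-range convention `Y_{s,j} = 1`. -/
def Yc [CommRing R] (r : ℕ) (Y : Fin 2 → Fin r → R) (s j : ℕ) : R :=
  if h : 1 ≤ s ∧ s ≤ 2 ∧ 1 ≤ j ∧ j ≤ r then Y ⟨s - 1, by omega⟩ ⟨j - 1, by omega⟩ else 1

/-- `x̄(a; Y)`. -/
def xbar [Field R] (r : ℕ) (a : Fin (r + 1) → R) (Y : Fin 2 → Fin r → R) : Mat r R :=
  Matrix.diagonal a *
    (((List.range r).map fun t =>
        xm r (jIdx r (r - t)) (Yc r Y 1 (jIdx r (r - t))) *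
          alm r (jIdx r (r - t)) (Yc r Y 1 (jIdx r (r - t)))).prod) *
    (((List.range r).map fun t =>
        xm r (jIdx r (r - t)) (Yc r Y 2 (jIdx r (r - t))) *
          alm r (jIdx r (r - t)) (Yc r Y 2 (jIdx r (r - t)))).prod)

/-- `a^{Λ_i} = a_1 ⋯ a_i`, with the convention `a^{Λ_i} = 1` for `i ≤ 0` or `i ≥ r+1`. -/
def aLam [CommRing R] (r : ℕ) (a : Fin (r + 1) → R) (i : ℕ) : R :=
  if 1 ≤ i ∧ i ≤ r then ∏ p : Fin (r + 1), (if (p : ℕ) < i then a p else 1) else 1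

open Fin.NatCast in
/-- The Weyl group element `s_{j_1} s_{j_2} ⋯ s_{j_k}` as a permutation of `Fin (r+1)`. -/
def wperm (r k : ℕ) : Equiv.Perm (Fin (r + 1)) :=
  (((List.range k).map fun t =>
      Equiv.swap ((jIdx r (t + 1) - 1 : ℕ) : Fin (r + 1))
        ((jIdx r (t + 1) : ℕ) : Fin (r + 1)))).prod

/-- The generalized minor `Δ_{Λ_m, wΛ_m}(g) = D_{{1,…,m}, w({1,…,m})}(g)`:
rows `{1,…,m}` and columns `w({1,…,m})`, both listed in increasing order. -/
def genMinor [CommRing R] (r m : ℕ) (w : Equiv.Perm (Fin (r + 1))) (g : Mat r R) : R :=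
  Matrix.det (Matrix.of fun p q :
      Fin ((Finset.univ.filter fun x : Fin (r + 1) => (x : ℕ) < m).card) =>
    g (((Finset.univ.filter fun x : Fin (r + 1) => (x : ℕ) < m).orderIsoOfFin rfl p : Fin (r+1)))
      ((((Finset.univ.filter fun x : Fin (r + 1) => (x : ℕ) < m).image w).orderIsoOfFin
        (Finset.card_image_of_injective _ w.injective) q : Fin (r+1))))


def YcU (r : ℕ) (Y : Fin 2 → Fin r → ℂˣ) (s j : ℕ) : ℂˣ :=
  if h : 1 ≤ s ∧ s ≤ 2 ∧ 1 ≤ j ∧ j ≤ r then Y ⟨s - 1, by omega⟩ ⟨j - 1, by omega⟩ else 1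

/-- `Φ_{1,l}(Y)`. -/
def Phi1 (r : ℕ) (Y : Fin 2 → Fin r → ℂˣ) (l : ℕ) : ℂˣ :=
  if l % 2 = 0 then
    YcU r Y 1 (l - 1) * YcU r Y 2 (l - 1) * YcU r Y 1 (l + 1) * YcU r Y 2 (l + 1) *
      (YcU r Y 1 l * (YcU r Y 2 l) ^ 2)⁻¹
  else
    YcU r Y 2 (l - 1) * YcU r Y 2 (l + 1) * (YcU r Y 1 l * (YcU r Y 2 l) ^ 2)⁻¹

/-- `Φ_{2,l}(Y)`. -/
def Phi2 (r : ℕ) (Y : Fin 2 → Fin r → ℂˣ) (l : ℕ) : ℂˣ :=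
  if l % 2 = 0 then YcU r Y 2 (l - 1) * YcU r Y 2 (l + 1) * (YcU r Y 2 l)⁻¹
  else (YcU r Y 2 l)⁻¹

/-- The diagonal entries of `Φ_H(a;Y) = a ⋅ ∏_{i=1}^r ∏_{s=1}^2 α_i^∨(Y_{s,i})`. -/
def PhiH (r : ℕ) (a : Fin (r + 1) → ℂˣ) (Y : Fin 2 → Fin r → ℂˣ) : Fin (r + 1) → ℂˣ :=
  fun m => a m * (YcU r Y 1 ((m : ℕ) + 1) * YcU r Y 2 ((m : ℕ) + 1)) *
    (YcU r Y 1 (m : ℕ) * YcU r Y 2 (m : ℕ))⁻¹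

/-- The map `φ : H × (ℂ^×)^{2r} → H × (ℂ^×)^{2r}`. -/
def phiMap (r : ℕ) :
    ((Fin (r + 1) → ℂˣ) × (Fin 2 → Fin r → ℂˣ)) → ((Fin (r + 1) → ℂˣ) × (Fin 2 → Fin r → ℂˣ)) :=
  fun aY => (PhiH r aY.1 aY.2,
    fun s j => if (s : ℕ) = 0 then Phi1 r aY.2 ((j : ℕ) + 1) else Phi2 r aY.2 ((j : ℕ) + 1))

/-- `Ψ_{1,l}(Y)` (with value `1` for `l` out of range). -/
def Psi1 (r : ℕ) (Y : Fin 2 → Fin r → ℂˣ) (l : ℕ) : ℂˣ :=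
  if 1 ≤ l ∧ l ≤ r then
    (if l % 2 = 0 then
      (YcU r Y 1 (l - 1) * YcU r Y 1 l * YcU r Y 1 (l + 1) * YcU r Y 2 (l - 3) *
        YcU r Y 2 (l - 2) * YcU r Y 2 (l + 2) * YcU r Y 2 (l + 3))⁻¹
    else
      (YcU r Y 1 l * YcU r Y 2 (l - 2) * YcU r Y 2 (l - 1) * YcU r Y 2 (l + 1) *
        YcU r Y 2 (l + 2))⁻¹)
  else 1

/-- `Ψ_{2,l}(Y)` (with value `1` for `l` out of range). -/
def Psi2 (r : ℕ) (Y : Fin 2 → Fin r → ℂˣ) (l : ℕ) : ℂˣ :=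
  if 1 ≤ l ∧ l ≤ r then
    (if l % 2 = 0 then (YcU r Y 2 (l - 1) * YcU r Y 2 l * YcU r Y 2 (l + 1))⁻¹
     else (YcU r Y 2 l)⁻¹)
  else 1

/-- The diagonal entries of `Ψ_H(a;Y) = a ⋅ (∏_{i=1}^r ∏_{s=1}^2 α_i^∨(Ψ_{s,i}(Y)))⁻¹`. -/
def PsiH (r : ℕ) (a : Fin (r + 1) → ℂˣ) (Y : Fin 2 → Fin r → ℂˣ) : Fin (r + 1) → ℂˣ :=
  fun m => a m * ((Psi1 r Y ((m : ℕ) + 1) * Psi2 r Y ((m : ℕ) + 1)) *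
    (Psi1 r Y (m : ℕ) * Psi2 r Y (m : ℕ))⁻¹)⁻¹

/-- The map `ψ : H × (ℂ^×)^{2r} → H × (ℂ^×)^{2r}`. -/
def psiMap (r : ℕ) :
    ((Fin (r + 1) → ℂˣ) × (Fin 2 → Fin r → ℂˣ)) → ((Fin (r + 1) → ℂˣ) × (Fin 2 → Fin r → ℂˣ)) :=
  fun aY => (PsiH r aY.1 aY.2,
    fun s j => if (s : ℕ) = 0 then Psi1 r aY.2 ((j : ℕ) + 1) else Psi2 r aY.2 ((j : ℕ) + 1))

/-- `s̄_i = x_i(-1) y_i(1) x_i(-1)`. -/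
noncomputable def sbar (r i : ℕ) : Mat r ℂ := xm r i (-1) * ym r i 1 * xm r i (-1)

/-- The representative `\overline{c²} = s̄_{j_{2r}} ⋯ s̄_{j_1}`. -/
noncomputable def c2bar (r : ℕ) : Mat r ℂ :=
  (((List.range (2 * r)).map fun t => sbar r (jIdx r (2 * r - t)))).prod

/-- membership in the Borel subgroup `B` of upper triangular matrices of `SL_{r+1}`. -/
def inB (r : ℕ) (m : Mat r ℂ) : Prop :=
  m.det = 1 ∧ ∀ p q : Fin (r + 1), q < p → m p q = 0

/-- membership in the opposite Borel subgroup `B₋` of lower triangular matrices of `SL_{r+1}`. -/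
def inBminus (r : ℕ) (m : Mat r ℂ) : Prop :=
  m.det = 1 ∧ ∀ p q : Fin (r + 1), p < q → m p q = 0


/-! ### The field `K = ℂ(a_1,…,a_r, Y_{1,1},…,Y_{2,r})` of rational functions -/

/-- The field of rational functions in the variables `a_1,…,a_r` and `Y_{s,j}`. -/
abbrev KK (r : ℕ) := FractionRing (MvPolynomial (Fin r ⊕ Fin 2 × Fin r) ℂ)

noncomputable def aKK (r : ℕ) (i : Fin r) : KK r :=
  algebraMap (MvPolynomial (Fin r ⊕ Fin 2 × Fin r) ℂ) (KK r) (MvPolynomial.X (Sum.inl i))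

noncomputable def YKK0 (r : ℕ) (s : Fin 2) (j : Fin r) : KK r :=
  algebraMap (MvPolynomial (Fin r ⊕ Fin 2 × Fin r) ℂ) (KK r) (MvPolynomial.X (Sum.inr (s, j)))

/-- `Y_{s,j}` as a rational function (with the out-of-range convention). -/
noncomputable def YK (r s j : ℕ) : KK r := Yc r (YKK0 r) s j

noncomputable def YKz (r : ℕ) (s : ℕ) (j : ℤ) : KK r := if 0 ≤ j then YK r s j.toNat else 1

/-- The generic element `a = diag(a_1,…,a_r,(a_1⋯a_r)⁻¹)` of `H`. -/
noncomputable def aDiagK (r : ℕ) : Fin (r + 1) → KK r :=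
  fun m => if h : (m : ℕ) < r then aKK r ⟨m, h⟩ else (∏ i : Fin r, aKK r i)⁻¹

/-- The generic point `x̄(a;Y)` with entries in `K`. -/
noncomputable def xbarK (r : ℕ) : Mat r (KK r) := xbar r (aDiagK r) (YKK0 r)

noncomputable def aLamK (r i : ℕ) : KK r := aLam r (aDiagK r) i

noncomputable def aLamKz (r : ℕ) (i : ℤ) : KK r := if 0 ≤ i then aLamK r i.toNat else 1

/-- `A_{1,j}` as a rational function (with the convention `A_{1,j} = 1` out of range). -/
noncomputable def A1K (r j : ℕ) : KK r :=
  if 1 ≤ j ∧ j ≤ r then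
    (if j % 2 = 0 then YK r 1 j * YK r 2 j / (YK r 1 (j - 1) * YK r 1 (j + 1))
     else YK r 1 j * YK r 2 j / (YK r 2 (j - 1) * YK r 2 (j + 1)))
  else 1

noncomputable def A1Kz (r : ℕ) (j : ℤ) : KK r := if 0 ≤ j then A1K r j.toNat else 1

/-- `A[b,c;x]`. -/
noncomputable def AbrK (r : ℕ) (b c x : ℤ) : KK r :=
  (∏ s ∈ Finset.Ico b c, A1Kz r (x - 2 * s - 2) * A1Kz r (x - 2 * s - 3))⁻¹ *
    (A1Kz r (x - 2 * c - 2))⁻¹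

/-! ### The quiver `Γ` and cluster mutation -/

def jz (r : ℕ) (m : ℤ) : ℤ := (jIdx r m.toNat : ℤ)

/-- The arrows of the quiver `Γ`. -/
def arr (r : ℕ) (v w : ℤ) : Prop :=
  (∃ m : ℤ, 1 ≤ m ∧ m ≤ (r : ℤ) ∧
    ((v = (r : ℤ) + m ∧ w = m) ∨ (v = m ∧ w = -(jz r m)))) ∨
  (∃ m m' : ℤ, 1 ≤ m ∧ m < m' ∧ m' ≤ (r : ℤ) ∧
    (jz r m - jz r m' = 1 ∨ jz r m' - jz r m = 1) ∧
    ((v = m ∧ w = m') ∨ (v = m' ∧ w = (r : ℤ) + m) ∨ (v = -(jz r m') ∧ w = m)))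

open Classical in
/-- The exchange matrix of `Γ`. -/
noncomputable def bmat (r : ℕ) (v k : ℤ) : ℤ :=
  (if arr r v k then 1 else 0) - (if arr r k v then 1 else 0)

/-- The vertex set `{-r,…,-1} ∪ {1,…,2r}` (as a subset of `Finset.Icc (-r) (2r)`;
the extra vertex `0` is isolated and carries no arrows). -/
noncomputable def VFin (r : ℕ) : Finset ℤ := Finset.Icc (-(r : ℤ)) (2 * r)

/-- Mutation of a seed `(z, B)` at the (mutable) vertex `k`. -/
noncomputable def mutate (r : ℕ) (k : ℤ) (S : (ℤ → KK r) × (ℤ → ℤ → ℤ)) :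
    (ℤ → KK r) × (ℤ → ℤ → ℤ) :=
  ⟨fun v => if v = k then
      ((∏ w ∈ VFin r, if 0 < S.2 w k then S.1 w ^ (S.2 w k).toNat else 1) +
       (∏ w ∈ VFin r, if S.2 w k < 0 then S.1 w ^ (-(S.2 w k)).toNat else 1)) / S.1 k
    else S.1 v,
   fun v l => if v = k ∨ l = k then -(S.2 v l)
     else S.2 v l + (|S.2 v k| * S.2 k l + S.2 v k * |S.2 k l|) / 2⟩

/-- The initial seed `𝕍`. -/
noncomputable def initSeed (r : ℕ) : (ℤ → KK r) × (ℤ → ℤ → ℤ) :=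
  ⟨fun v => if 1 ≤ v ∧ v ≤ 2 * (r : ℤ) then
      genMinor r (jIdx r v.toNat) (wperm r v.toNat) (xbarK r)
    else if -(r : ℤ) ≤ v ∧ v ≤ -1 then genMinor r (-v).toNat 1 (xbarK r)
    else 1,
   bmat r⟩

/-- Application of a sequence of mutations, the rightmost applied first. -/
noncomputable def mutSeq (r : ℕ) (ks : List ℤ) (S : (ℤ → KK r) × (ℤ → ℤ → ℤ)) :
    (ℤ → KK r) × (ℤ → ℤ → ℤ) :=
  ks.foldr (fun k T => mutate r k T) S

/-- The cluster variable at vertex `v` of the seed obtained from `𝕍` by the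
mutation sequence `ks` (rightmost applied first). -/
noncomputable def cvar (r : ℕ) (ks : List ℤ) (v : ℤ) : KK r :=
  (mutSeq r ks (initSeed r)).1 v

/-- The mutation sequence `μ[l]`. -/
def muList (r k l : ℕ) : List ℤ :=
  (((List.range (l + 1)).reverse).map fun t : ℕ =>
    [((k : ℤ) - ((r / 2 : ℕ) : ℤ) + t), ((k : ℤ) + t + 1), ((k : ℤ) + t)]).flatten

/-- The mutation sequence `μ′[l]`. -/
def mu'List (r k l : ℕ) : List ℤ :=
  ((((List.range (l + 1)).reverse).map fun t : ℕ =>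
    [((k : ℤ) + t + 1), (((r / 2 : ℕ) : ℤ) + k + t + 2), (((r / 2 : ℕ) : ℤ) + k + t + 1)]).flatten)
    ++ [(k : ℤ)]

/-- The mutation sequence `μ″[l]`. -/
def mu''List (r l : ℕ) : List ℤ :=
  ((((List.range (l + 1)).reverse).map fun t : ℕ =>
    [((((r + 1) / 2 : ℕ) : ℤ) - t - 1), ((r : ℤ) - t - 1), ((r : ℤ) - t)]).flatten)
    ++ [(((r + 1) / 2 : ℕ) : ℤ)]

/-! ### The index sets `R^p_l` -/

/-- `(𝐛,𝐜) ∈ R^p_l`, i.e. `0 ≤ b_1 < c_1 < b_2 < c_2 < ⋯ < b_p < c_p ≤ l`. -/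
def IsRpair (l p : ℕ) (b c : Fin p → ℤ) : Prop :=
  (∀ i, b i < c i) ∧ (∀ i j, i < j → c i < b j) ∧ (∀ i, 0 ≤ b i ∧ c i ≤ (l : ℤ))

open Classical in
/-- `Σ_{p ≥ 1} Σ_{(𝐛,𝐜) ∈ R^p_l} F p 𝐛 𝐜`. -/
noncomputable def RSum {M : Type _} [AddCommMonoid M] (l : ℕ)
    (F : (p : ℕ) → (Fin p → ℤ) → (Fin p → ℤ) → M) : M :=
  ∑ p ∈ Finset.Icc 1 (l + 1),
    ∑ bc ∈ Finset.univ.filter (fun bc : (Fin p → Fin (l + 1)) × (Fin p → Fin (l + 1)) =>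
        IsRpair l p (fun i => ((bc.1 i : ℕ) : ℤ)) (fun i => ((bc.2 i : ℕ) : ℤ))),
      F p (fun i => ((bc.1 i : ℕ) : ℤ)) (fun i => ((bc.2 i : ℕ) : ℤ))

def bfirst (p : ℕ) (b : Fin p → ℤ) : ℤ := if h : 0 < p then b ⟨0, h⟩ else 0

def clast (p : ℕ) (c : Fin p → ℤ) : ℤ := if h : 0 < p then c ⟨p - 1, by omega⟩ else 0

/-- `q ∈ [𝐛,𝐜] = [b_1,c_1] ∪ ⋯ ∪ [b_p,c_p]`. -/
def inBC (p : ℕ) (b c : Fin p → ℤ) (q : ℤ) : Prop := ∃ i, b i ≤ q ∧ q ≤ c i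

instance (p : ℕ) (b c : Fin p → ℤ) (q : ℤ) : Decidable (inBC p b c q) :=
  inferInstanceAs (Decidable (∃ i, b i ≤ q ∧ q ≤ c i))

/-- `j_k` as an integer. -/
def jkz (r k : ℕ) : ℤ := (jIdx r k : ℤ)

/-! ### Monomial realizations of crystals -/

/-- A formal Laurent monomial `∏ Y_{s,j}^{ζ_{s,j}}` (`s ∈ ℤ`, `j ∈ {1,…,r}`),
encoded by its finitely supported exponent vector (`j` is 0-indexed here). -/
abbrev Mon (r : ℕ) := (ℤ × Fin r) →₀ ℤ

/-- The exponent vector of `Y_{s,j}` (`j` 1-indexed, `0` out of range). -/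
noncomputable def YexpM (r : ℕ) (s : ℤ) (j : ℕ) : Mon r :=
  if h : 1 ≤ j ∧ j ≤ r then Finsupp.single (s, ⟨j - 1, by omega⟩) 1 else 0

/-- The exponent vector of the monomial `A_{s,i}`. -/
noncomputable def AexpM (r : ℕ) (s : ℤ) (i : ℕ) : Mon r :=
  YexpM r s i + YexpM r (s + 1) i -
    (if i % 2 = 1 then YexpM r (s + 1) (i - 1) + YexpM r (s + 1) (i + 1)
     else YexpM r s (i - 1) + YexpM r s (i + 1))

/-- The partial sum `Σ_{k ≤ s} ζ_{k,i}` (`i` 1-indexed). -/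
noncomputable def psum (r : ℕ) (M : Mon r) (i : ℕ) (s : ℤ) : ℤ :=
  ∑ x ∈ M.support.filter (fun x => ((x.2 : ℕ) + 1 = i) ∧ x.1 ≤ s), M x

/-- `φ_i(M) = max { Σ_{k ≤ s} ζ_{k,i} : s ∈ ℤ }`. -/
noncomputable def phiIM (r : ℕ) (M : Mon r) (i : ℕ) : ℤ :=
  (insert (0 : ℤ) ((M.support.image Prod.fst).image fun s => psum r M i s)).max'
    (Finset.insert_nonempty _ _)

/-- `n_{f_i} = min { n : φ_i(M) = Σ_{k ≤ n} ζ_{k,i} }`. -/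
noncomputable def nfM (r : ℕ) (M : Mon r) (i : ℕ) : ℤ :=
  WithTop.untopD 0
    ((((M.support.filter fun x => (x.2 : ℕ) + 1 = i).image Prod.fst).filter
      fun s => psum r M i s = phiIM r M i).min)

/-- The Kashiwara operator `f̃_i` on monomials (with `0 = none`). -/
noncomputable def ftil (r i : ℕ) : Option (Mon r) → Option (Mon r)
  | none => none
  | some M => if 0 < phiIM r M i then some (M - AexpM r (nfM r M i) i) else none

/-- The monomial realization of the Demazure crystal `B(Λ_{j_k})_{s_{j_1}⋯s_{j_k}}`:
`{ f̃_{j_1}^{c_1} ⋯ f̃_{j_k}^{c_k} (Y_{1,j_k}) } ∖ {0}`. -/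
noncomputable def DemSet (r k : ℕ) : Set (Mon r) :=
  { M | ∃ c : ℕ → ℕ,
      ((List.range k).reverse.foldl
        (fun x t => (ftil r (jIdx r (t + 1)))^[c (t + 1)] x)
        (some (YexpM r 1 (jIdx r k)))) = some M }

/-- Evaluation of a Laurent monomial at `Y_{1,j}, Y_{2,j} ∈ ℂˣ`. -/
noncomputable def evalMon (r : ℕ) (M : Mon r) (Y : Fin 2 → Fin r → ℂˣ) : ℂ :=
  ∏ x ∈ M.support,
    (if x.1 = 1 then ((Y 0 x.2 : ℂ)) else if x.1 = 2 then ((Y 1 x.2 : ℂ)) else 1) ^ (M x)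

/-! Push every diagonal factor of `x̄` to the left. Since `x_j(t) α_j^∨(t) = α_j^∨(t) x_j(t⁻¹)`,
and since the word `𝐢` lists the even letters before the odd ones while `x_i` commutes with
`α_j^∨` for distinct letters `i, j` of equal parity, each half of `x̄` is a diagonal matrix times
`∏_{j even} x_j(t_j⁻¹) ∏_{j odd} x_j(t_j⁻¹)`. Moving `x_j(s)` past `α_i^∨(t)` replaces `s` by
`s t^{-a_{ij}}`, with `a` the Cartan matrix of type `A_r`; collecting these factors gives `Φ`. -/

section Factorization

open Fin.NatCast Matrix

variable {K : Type*} [Field K] {r : ℕ}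

def letters (r e : ℕ) : List ℕ := (List.range ((r + e) / 2)).map fun t => 2 * t + 2 - e

theorem mem_letters {e j : ℕ} (he : e < 2) : j ∈ letters r e ↔ j % 2 = e ∧ 1 ≤ j ∧ j ≤ r := by
  simp only [letters, List.mem_map, List.mem_range]
  constructor
  · rintro ⟨t, ht, rfl⟩
    omega
  · rintro ⟨hj, h1, hr⟩
    exact ⟨(j - 1) / 2, by omega, by omega⟩

theorem letters_pairwise {e : ℕ} (he : e < 2) : (letters r e).Pairwise fun i k => i + 2 ≤ k :=
  List.pairwise_map.2 (List.pairwise_lt_range.imp fun h => by omega)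

theorem map_jIdx_range :
    (List.range r).map (fun t => jIdx r (r - t)) = letters r 0 ++ letters r 1 := by
  rw [show List.range r = List.range (r / 2 + (r + 1) / 2) by congr 1; omega, List.range_add,
    List.map_append, List.map_map]
  simp only [letters, Nat.add_zero, Nat.sub_zero]
  congr 1 <;> refine List.map_congr_left fun t ht => ?_ <;> rw [List.mem_range] at ht <;>
    simp only [Function.comp, jIdx] <;> split_ifs <;> omega

theorem prod_map_jIdx {M : Type*} [Monoid M] (F : ℕ → M) :
    ((List.range r).map fun t => F (jIdx r (r - t))).prod =
      ((letters r 0).map F).prod * ((letters r 1).map F).prod := by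
  rw [← List.prod_append, ← List.map_append, ← map_jIdx_range, List.map_map]
  rfl

theorem prod_map_mul_of_pairwise_commute {ι M : Type*} [Monoid M] {f g : ι → M} :
    ∀ {l : List ι}, l.Pairwise (fun i k => Commute (g i) (f k)) →
      (l.map fun i => f i * g i).prod = (l.map f).prod * (l.map g).prod
  | [], _ => by simp
  | i :: l, h => by
    rw [List.pairwise_cons] at h
    have hcomm : Commute (g i) (l.map f).prod :=
      Commute.list_prod_right _ _ (by simpa using h.1)
    simp only [List.map_cons, List.prod_cons, prod_map_mul_of_pairwise_commute h.2, mul_assoc,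
      ← mul_assoc (g i), hcomm.eq]

theorem prod_map_one_add_of_pairwise_mul_eq_zero {ι R : Type*} [Semiring R] {N : ι → R} :
    ∀ {l : List ι}, l.Pairwise (fun i k => N i * N k = 0) →
      (l.map fun i => 1 + N i).prod = 1 + (l.map N).sum
  | [], _ => by simp
  | i :: l, h => by
    rw [List.pairwise_cons] at h
    have hzero : N i * (l.map N).sum = 0 := by
      rw [← List.sum_map_mul_left l N (N i)]
      exact List.sum_eq_zero (by simpa using h.1)
    simp only [List.map_cons, List.prod_cons, List.sum_cons,
      prod_map_one_add_of_pairwise_mul_eq_zero h.2, add_mul, mul_add, one_mul, mul_one, hzero,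
      add_zero, add_assoc]

theorem prod_map_diagonal {ι n α : Type*} [Fintype n] [DecidableEq n] [CommSemiring α]
    (d : ι → n → α) (l : List ι) :
    (l.map fun i => diagonal (d i)).prod = diagonal fun m => (l.map fun i => d i m).prod := by
  induction l with
  | nil => simp
  | cons i l ih => simp [ih]

def eMat (r j : ℕ) (t : K) : Mat r K := single ((j - 1 : ℕ) : Fin (r + 1)) (j : Fin (r + 1)) t

theorem val_natCast_of_le {j : ℕ} (h : j ≤ r) : (((j : ℕ) : Fin (r + 1)) : ℕ) = j :=
  Fin.val_cast_of_lt (by omega)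

theorem xm_eq_one_add_eMat (j : ℕ) (t : K) : xm r j t = 1 + eMat r j t := rfl

theorem eMat_mul_eMat_of_add_two_le {i k : ℕ} (hik : i + 2 ≤ k) (hk : k ≤ r) (s t : K) :
    eMat r i s * eMat r k t = 0 := by
  refine Matrix.single_mul_single_of_ne (c := s) _ _ _ (fun h => ?_) t
  have := congrArg Fin.val h
  rw [val_natCast_of_le (by omega), val_natCast_of_le (by omega)] at this
  omega

theorem eMat_mul_diagonal {j : ℕ} (hj : j ≤ r) (s : K) (f : ℕ → K) (hf : f (j - 1) ≠ 0) :
    eMat r j s * diagonal (fun m : Fin (r + 1) => f m) =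
      diagonal (fun m : Fin (r + 1) => f m) * eMat r j (s * (f j / f (j - 1))) := by
  ext p q
  simp only [eMat, mul_diagonal, diagonal_mul, single_apply]
  split_ifs with h
  · obtain ⟨rfl, rfl⟩ := h
    rw [val_natCast_of_le hj, val_natCast_of_le (by omega)]
    field_simp
  · simp

theorem xm_mul_diagonal {j : ℕ} (hj : j ≤ r) (s : K) (f : ℕ → K) (hf : f (j - 1) ≠ 0) :
    xm r j s * diagonal (fun m : Fin (r + 1) => f m) =
      diagonal (fun m : Fin (r + 1) => f m) * xm r j (s * (f j / f (j - 1))) := by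
  rw [xm_eq_one_add_eMat, xm_eq_one_add_eMat, add_mul, mul_add, eMat_mul_diagonal hj s f hf,
    one_mul, mul_one]

theorem xm_mul_alm {j : ℕ} (hj1 : 1 ≤ j) (hjr : j ≤ r) {c : K} (hc : c ≠ 0) :
    xm r j c * alm r j c = alm r j c * xm r j c⁻¹ := by
  have h := xm_mul_diagonal hjr c (fun m => if m = j - 1 then c else if m = j then c⁻¹ else 1)
    (by simpa using hc)
  have harg : c * ((if j = j - 1 then c else if j = j then c⁻¹ else 1) /
      (if j - 1 = j - 1 then c else if j - 1 = j then c⁻¹ else 1)) = c⁻¹ := by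
    rw [if_neg (by omega), if_pos rfl, if_pos rfl]
    field_simp
  rw [alm, h, harg]

theorem commute_xm_alm {i k : ℕ} (hik : i + 2 ≤ k) (hk : k ≤ r) (s t : K) :
    Commute (xm r i s) (alm r k t) := by
  have h := xm_mul_diagonal (r := r) (j := i) (by omega) s
    (fun m => if m = k - 1 then t else if m = k then t⁻¹ else 1)
    (by rw [if_neg (by omega), if_neg (by omega)]; exact one_ne_zero)
  rwa [if_neg (show i ≠ k - 1 by omega), if_neg (show i ≠ k by omega),
    if_neg (show i - 1 ≠ k - 1 by omega), if_neg (show i - 1 ≠ k by omega), div_one,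
    mul_one] at h

def eSum (r : ℕ) (l : List ℕ) (u : ℕ → K) : Mat r K := (l.map fun j => eMat r j (u j)).sum

theorem eSum_congr {l : List ℕ} {u v : ℕ → K} (h : ∀ j ∈ l, u j = v j) :
    eSum r l u = eSum r l v := by
  rw [eSum, eSum, List.map_congr_left fun j hj => by rw [h j hj]]

theorem prod_xm_eq_one_add_eSum {l : List ℕ} (hl : l.Pairwise fun i k => i + 2 ≤ k)
    (hb : ∀ j ∈ l, j ≤ r) (u : ℕ → K) :
    (l.map fun j => xm r j (u j)).prod = 1 + eSum r l u :=
  prod_map_one_add_of_pairwise_mul_eq_zero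
    (hl.imp_of_mem fun _ hk h => eMat_mul_eMat_of_add_two_le h (hb _ hk) _ _)

theorem prod_xm_mul_alm {l : List ℕ} (hl : l.Pairwise fun i k => i + 2 ≤ k)
    (hb : ∀ j ∈ l, 1 ≤ j ∧ j ≤ r) {c : ℕ → K} (hc : ∀ j, c j ≠ 0) :
    (l.map fun j => xm r j (c j) * alm r j (c j)).prod =
      (l.map fun j => alm r j (c j)).prod * (1 + eSum r l fun j => (c j)⁻¹) := by
  rw [List.map_congr_left fun j hj => xm_mul_alm (hb j hj).1 (hb j hj).2 (hc j),
    prod_map_mul_of_pairwise_commute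
      (hl.imp_of_mem fun _ hk h => commute_xm_alm h (hb _ hk).2 _ _),
    prod_xm_eq_one_add_eSum hl fun j hj => (hb j hj).2]

theorem one_add_eSum_mul_diagonal {l : List ℕ} (hb : ∀ j ∈ l, j ≤ r) (u f : ℕ → K)
    (hf : ∀ j ∈ l, f (j - 1) ≠ 0) :
    (1 + eSum r l u) * diagonal (fun m : Fin (r + 1) => f m) =
      diagonal (fun m : Fin (r + 1) => f m) *
        (1 + eSum r l fun j => u j * (f j / f (j - 1))) := by
  rw [add_mul, mul_add, one_mul, mul_one, eSum, eSum, ← List.sum_map_mul_right,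
    ← List.sum_map_mul_left,
    List.map_congr_left fun j hj => eMat_mul_diagonal (hb j hj) (u j) f (hf j hj)]

/-- The diagonal of `∏_{j ≡ e (mod 2)} α_j^∨(c_j)` when `c 0 = c (r + 1) = 1`. -/
def alphaPar (e : ℕ) (c : ℕ → K) (m : ℕ) : K := if (m + 1) % 2 = e then c (m + 1) else (c m)⁻¹

theorem alphaPar_ne_zero {e : ℕ} {c : ℕ → K} (hc : ∀ j, c j ≠ 0) (m : ℕ) :
    alphaPar e c m ≠ 0 := by
  unfold alphaPar
  split_ifs
  exacts [hc _, inv_ne_zero (hc _)]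

theorem alphaPar_div {e j : ℕ} (he : e < 2) (hj : 1 ≤ j) (c : ℕ → K) :
    alphaPar e c j / alphaPar e c (j - 1) =
      if j % 2 = e then (c j ^ 2)⁻¹ else c (j - 1) * c (j + 1) := by
  simp only [alphaPar, Nat.sub_add_cancel hj]
  split_ifs <;> first | omega | field_simp

theorem alphaPar_zero_mul_alphaPar_one (c : ℕ → K) (m : ℕ) :
    alphaPar 0 c m * alphaPar 1 c m = c (m + 1) / c m := by
  unfold alphaPar
  split_ifs <;> first | omega | ring

theorem prod_alm_letters {e : ℕ} (he : e < 2) {c : ℕ → K} (hc0 : c 0 = 1)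
    (hcr : c (r + 1) = 1) :
    ((letters r e).map fun j => alm r j (c j)).prod =
      diagonal fun m : Fin (r + 1) => alphaPar e c m := by
  simp only [alm]
  rw [prod_map_diagonal]
  refine congrArg diagonal (funext fun m => ?_)
  have hnd : (letters r e).Nodup := (letters_pairwise he).imp fun h => by omega
  have hsplit : ∀ j ∈ letters r e,
      (if (m : ℕ) = j - 1 then c j else if (m : ℕ) = j then (c j)⁻¹ else 1) =
        (if j = (m : ℕ) + 1 then c j else 1) * (if j = (m : ℕ) then (c j)⁻¹ else 1) := by
    intro j hj
    have := ((mem_letters he).1 hj).2.1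
    split_ifs <;> first | omega | simp
  rw [List.map_congr_left hsplit, List.prod_map_mul, ← List.prod_toFinset _ hnd,
    ← List.prod_toFinset _ hnd, Finset.prod_ite_eq', Finset.prod_ite_eq']
  simp only [List.mem_toFinset, mem_letters he, alphaPar]
  have := m.isLt
  split_ifs <;> first
    | omega
    | (rw [show (m : ℕ) + 1 = r + 1 by omega, hcr]; simp)
    | (rw [show (m : ℕ) = 0 by omega, hc0]; simp)
    | simp

theorem prod_word_xm (u : ℕ → K) :
    ((List.range r).map fun t => xm r (jIdx r (r - t)) (u (jIdx r (r - t)))).prod =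
      (1 + eSum r (letters r 0) u) * (1 + eSum r (letters r 1) u) := by
  rw [prod_map_jIdx (fun j => xm r j (u j)),
    prod_xm_eq_one_add_eSum (letters_pairwise two_pos) fun j hj => ((mem_letters two_pos).1 hj).2.2,
    prod_xm_eq_one_add_eSum (letters_pairwise one_lt_two)
      fun j hj => ((mem_letters one_lt_two).1 hj).2.2]

theorem prod_word_xm_mul_alm {c : ℕ → K} (hc : ∀ j, c j ≠ 0) (hc0 : c 0 = 1)
    (hcr : c (r + 1) = 1) :
    ((List.range r).map fun t =>
        xm r (jIdx r (r - t)) (c (jIdx r (r - t))) *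
          alm r (jIdx r (r - t)) (c (jIdx r (r - t)))).prod =
      diagonal (fun m : Fin (r + 1) => alphaPar 0 c m) *
          (1 + eSum r (letters r 0) fun j => (c j)⁻¹) *
        (diagonal (fun m : Fin (r + 1) => alphaPar 1 c m) *
          (1 + eSum r (letters r 1) fun j => (c j)⁻¹)) := by
  rw [prod_map_jIdx (fun j => xm r j (c j) * alm r j (c j)),
    prod_xm_mul_alm (letters_pairwise two_pos) (fun j hj => ((mem_letters two_pos).1 hj).2) hc,
    prod_xm_mul_alm (letters_pairwise one_lt_two)
      (fun j hj => ((mem_letters one_lt_two).1 hj).2) hc,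
    prod_alm_letters two_pos hc0 hcr, prod_alm_letters one_lt_two hc0 hcr]

theorem one_add_eSum_mul_diagonal_alphaPar_mul {e e' : ℕ} (he : e < 2) (he' : e' < 2)
    {c : ℕ → K} (hc : ∀ j, c j ≠ 0) (u : ℕ → K) (Z : Mat r K) :
    (1 + eSum r (letters r e) u) * (diagonal (fun m : Fin (r + 1) => alphaPar e' c m) * Z) =
      diagonal (fun m : Fin (r + 1) => alphaPar e' c m) *
        ((1 + eSum r (letters r e) fun j =>
          u j * if e = e' then (c j ^ 2)⁻¹ else c (j - 1) * c (j + 1)) * Z) := by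
  rw [← mul_assoc, one_add_eSum_mul_diagonal (fun j hj => ((mem_letters he).1 hj).2.2) u _
    (fun j _ => alphaPar_ne_zero hc _), mul_assoc,
    eSum_congr fun j hj => by
      rw [alphaPar_div he' ((mem_letters he).1 hj).2.1, ((mem_letters he).1 hj).1]]

/-- `Φ_{1,l}` with `c = Y_{1,·}` and `d = Y_{2,·}`. -/
def phiOne (c d : ℕ → K) (l : ℕ) : K :=
  if l % 2 = 0 then c (l - 1) * d (l - 1) * c (l + 1) * d (l + 1) * (c l * d l ^ 2)⁻¹
  else d (l - 1) * d (l + 1) * (c l * d l ^ 2)⁻¹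

/-- `Φ_{2,l}` with `d = Y_{2,·}`. -/
def phiTwo (d : ℕ → K) (l : ℕ) : K :=
  if l % 2 = 0 then d (l - 1) * d (l + 1) * (d l)⁻¹ else (d l)⁻¹

theorem diagonal_mul_prod_xm_alm (a : Fin (r + 1) → K) {c d : ℕ → K} (hc : ∀ j, c j ≠ 0)
    (hd : ∀ j, d j ≠ 0) (hc0 : c 0 = 1) (hcr : c (r + 1) = 1) (hd0 : d 0 = 1)
    (hdr : d (r + 1) = 1) :
    diagonal a *
        ((List.range r).map fun t =>
          xm r (jIdx r (r - t)) (c (jIdx r (r - t))) *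
            alm r (jIdx r (r - t)) (c (jIdx r (r - t)))).prod *
        ((List.range r).map fun t =>
          xm r (jIdx r (r - t)) (d (jIdx r (r - t))) *
            alm r (jIdx r (r - t)) (d (jIdx r (r - t)))).prod =
      diagonal (fun m => a m * (c (m + 1) * d (m + 1)) * (c m * d m)⁻¹) *
        ((List.range r).map fun t => xm r (jIdx r (r - t)) (phiOne c d (jIdx r (r - t)))).prod *
        ((List.range r).map fun t => xm r (jIdx r (r - t)) (phiTwo d (jIdx r (r - t)))).prod := by
  have h0 : (0 : ℕ) < 2 := two_pos
  have h1 : (1 : ℕ) < 2 := one_lt_two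
  rw [prod_word_xm_mul_alm hc hc0 hcr, prod_word_xm_mul_alm hd hd0 hdr, prod_word_xm, prod_word_xm]
  simp only [mul_assoc, one_add_eSum_mul_diagonal_alphaPar_mul h0 h1 hc,
    one_add_eSum_mul_diagonal_alphaPar_mul h0 h0 hd,
    one_add_eSum_mul_diagonal_alphaPar_mul h0 h1 hd,
    one_add_eSum_mul_diagonal_alphaPar_mul h1 h0 hd,
    one_add_eSum_mul_diagonal_alphaPar_mul h1 h1 hd]
  simp only [← mul_assoc, diagonal_mul_diagonal, zero_ne_one, one_ne_zero, if_true, if_false]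
  congr 1
  · congr 1
    · congr 1
      · congr 1
        · refine congrArg diagonal (funext fun m => ?_)
          linear_combination (a m * (alphaPar 0 d m * alphaPar 1 d m)) *
              alphaPar_zero_mul_alphaPar_one c m +
            (a m * (c (m + 1) / c m)) * alphaPar_zero_mul_alphaPar_one d m
        · refine congrArg _ (eSum_congr fun j hj => ?_)
          simp only [phiOne, ((mem_letters h0).1 hj).1, if_true]
          ring
      · refine congrArg _ (eSum_congr fun j hj => ?_)
        simp only [phiOne, ((mem_letters h1).1 hj).1, one_ne_zero, if_false]
        ring
    · refine congrArg _ (eSum_congr fun j hj => ?_)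
      simp only [phiTwo, ((mem_letters h0).1 hj).1, if_true]
      ring
  · refine congrArg _ (eSum_congr fun j hj => ?_)
    simp only [phiTwo, ((mem_letters h1).1 hj).1, one_ne_zero, if_false]

end Factorization

theorem statement1_general (r : ℕ)
    (a : Fin (r + 1) → ℂˣ) (Y : Fin 2 → Fin r → ℂˣ) :
    xbar r (fun m => (a m : ℂ)) (fun s j => (Y s j : ℂ)) =
      Matrix.diagonal (fun m => (PhiH r a Y m : ℂ)) *
        (((List.range r).map fun t =>
            xm r (jIdx r (r - t)) ((Phi1 r Y (jIdx r (r - t)) : ℂ))).prod) *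
        (((List.range r).map fun t =>
            xm r (jIdx r (r - t)) ((Phi2 r Y (jIdx r (r - t)) : ℂ))).prod) := by
  set c : ℕ → ℕ → ℂ := fun s j => (YcU r Y s j : ℂ)
  have hYc : ∀ s j, Yc r (fun s j => (Y s j : ℂ)) s j = c s j := by
    intro s j
    simp only [c, Yc, YcU]
    split_ifs <;> rfl
  have hc0 : ∀ s, c s 0 = 1 := fun s => by simp [c, YcU]
  have hcr : ∀ s, c s (r + 1) = 1 := fun s => by simp [c, YcU]
  have hPhiH : ∀ m, (PhiH r a Y m : ℂ) =
      a m * (c 1 (m + 1) * c 2 (m + 1)) * (c 1 m * c 2 m)⁻¹ := by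
    simp [PhiH, c]
  have hPhi1 : ∀ j, (Phi1 r Y j : ℂ) = phiOne (c 1) (c 2) j := by
    intro j
    simp only [Phi1, phiOne, c]
    split_ifs <;> push_cast <;> rfl
  have hPhi2 : ∀ j, (Phi2 r Y j : ℂ) = phiTwo (c 2) j := by
    intro j
    simp only [Phi2, phiTwo, c]
    split_ifs <;> push_cast <;> rfl
  simp only [xbar, hYc, hPhiH, hPhi1, hPhi2]
  exact diagonal_mul_prod_xm_alm _ (fun _ => Units.ne_zero _) (fun _ => Units.ne_zero _)
    (hc0 1) (hcr 1) (hc0 2) (hcr 2)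

/-- `x̄ = x^G_𝐢 ∘ φ`. -/
theorem statement1 (r : ℕ) (hr : 3 ≤ r)
    (a : Fin (r + 1) → ℂˣ) (ha : (∏ m, (a m : ℂ)) = 1) (Y : Fin 2 → Fin r → ℂˣ) :
    xbar r (fun m => (a m : ℂ)) (fun s j => (Y s j : ℂ)) =
      Matrix.diagonal (fun m => (PhiH r a Y m : ℂ)) *
        (((List.range r).map fun t =>
            xm r (jIdx r (r - t)) ((Phi1 r Y (jIdx r (r - t)) : ℂ))).prod) *
        (((List.range r).map fun t =>
            xm r (jIdx r (r - t)) ((Phi2 r Y (jIdx r (r - t)) : ℂ))).prod) :=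
  statement1_general r a Y

end DBC
end

section
/- Let k ∈ {⌊(r+1)/2⌋+1,…,r−1} and l ∈ {0,…,r−k−2}, and let μ[l] = (μ_{k−⌊r/2⌋+l}μ_{k+l+1}μ_{k+l})⋯(μ_{k−⌊r/2⌋+1}μ_{k+2}μ_{k+1})(μ_{k−⌊r/2⌋}μ_{k+1}μ_k) (rightmost mutation applied first). Then, as rational functions: (φ^G_{μ_{k+l+2} μ_{k+l+1} μ[l] 𝕍})_{k+l+2}(a;𝐘) = (φ^G_{μ_{k+l+2}𝕍})_{k+l+2}(a;𝐘); that is, the cluster variable at vertex k+l+2 produced after the mutation sequence μ_{k+l+1}μ[l] coincides with the one produced by a single mutation of the initial seed at vertex k+l+2. -/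
open scoped BigOperators

namespace DBC

variable {R : Type _}

/-! The vertex `k+l+2` is joined by no arrow to any vertex mutated before it. Mutations at
vertices not adjacent to `m` leave column `m` of the exchange matrix and the cluster variables
at `m` and at its neighbours unchanged, and these are all that the exchange relation at `m`
reads. -/

section Mutation

variable {r : ℕ}

lemma mutate_fst_of_ne {k v : ℤ} (S : (ℤ → KK r) × (ℤ → ℤ → ℤ)) (hv : v ≠ k) :
    (mutate r k S).1 v = S.1 v :=
  if_neg hv

lemma mutate_snd_of_eq_zero {k m : ℤ} (S : (ℤ → KK r) × (ℤ → ℤ → ℤ)) (hkm : S.2 k m = 0)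
    (hmk : m ≠ k) (v : ℤ) : (mutate r k S).2 v m = S.2 v m := by
  by_cases hv : v = k
  · subst hv
    simp [mutate, hkm]
  · simp [mutate, hv, hmk, hkm]

lemma mutSeq_cons (k : ℤ) (ks : List ℤ) (S : (ℤ → KK r) × (ℤ → ℤ → ℤ)) :
    mutSeq r (k :: ks) S = mutate r k (mutSeq r ks S) :=
  rfl

lemma mutSeq_fst_of_not_mem {v : ℤ} {ks : List ℤ} (S : (ℤ → KK r) × (ℤ → ℤ → ℤ))
    (hv : v ∉ ks) : (mutSeq r ks S).1 v = S.1 v := by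
  induction ks with
  | nil => rfl
  | cons k ks ih =>
    rw [List.mem_cons, not_or] at hv
    rw [mutSeq_cons, mutate_fst_of_ne _ hv.1, ih hv.2]

lemma mutSeq_snd_of_forall {m : ℤ} {ks : List ℤ} (S : (ℤ → KK r) × (ℤ → ℤ → ℤ))
    (hks : ∀ k ∈ ks, S.2 k m = 0 ∧ k ≠ m) (v : ℤ) : (mutSeq r ks S).2 v m = S.2 v m := by
  induction ks generalizing v with
  | nil => rfl
  | cons k ks ih =>
    have ih' := ih fun j hj => hks j (List.mem_cons_of_mem k hj)
    obtain ⟨hkm, hmk⟩ := hks k List.mem_cons_self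
    rw [mutSeq_cons, mutate_snd_of_eq_zero _ ((ih' k).trans hkm) hmk.symm, ih']

lemma mutate_fst_self_congr {m : ℤ} {S T : (ℤ → KK r) × (ℤ → ℤ → ℤ)}
    (h2 : ∀ w, S.2 w m = T.2 w m) (h1 : ∀ w, S.2 w m ≠ 0 → S.1 w = T.1 w)
    (hm : S.1 m = T.1 m) : (mutate r m S).1 m = (mutate r m T).1 m := by
  simp only [mutate, ← h2, hm]
  refine congrArg (· / _) (congrArg₂ (· + ·) ?_ ?_) <;>
    refine Finset.prod_congr rfl fun w _ => ?_ <;> split_ifs with h <;>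
    first | rfl | rw [h1 w (by omega)]

theorem mutate_mutSeq_fst_self {m : ℤ} {ks : List ℤ} (S : (ℤ → KK r) × (ℤ → ℤ → ℤ))
    (hks : ∀ k ∈ ks, S.2 k m = 0 ∧ k ≠ m) :
    (mutate r m (mutSeq r ks S)).1 m = (mutate r m S).1 m := by
  have h2 := mutSeq_snd_of_forall S hks
  refine mutate_fst_self_congr h2 (fun w hw => mutSeq_fst_of_not_mem S fun hmem => ?_)
    (mutSeq_fst_of_not_mem S fun hmem => (hks m hmem).2 rfl)
  exact hw ((h2 w).trans (hks w hmem).1)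

end Mutation

section Quiver

variable {r : ℕ}

lemma jz_of_le {j : ℤ} (h1 : 1 ≤ j) (h2 : j ≤ (((r + 1) / 2 : ℕ) : ℤ)) :
    jz r j = 2 * (((r + 1) / 2 : ℕ) : ℤ) + 1 - 2 * j := by
  have hj : ((j.toNat : ℕ) : ℤ) = j := Int.toNat_of_nonneg (by omega)
  simp only [jz, jIdx]
  split_ifs <;> omega

lemma jz_of_lt {j : ℤ} (h1 : (((r + 1) / 2 : ℕ) : ℤ) < j) (h2 : j ≤ r) :
    jz r j = 2 * r + 2 - 2 * j := by
  have hj : ((j.toNat : ℕ) : ℤ) = j := Int.toNat_of_nonneg (by omega)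
  simp only [jz, jIdx]
  split_ifs <;> omega

lemma arr_adjacent {v w : ℤ} (hv : 1 ≤ v ∧ v ≤ r) (hw : 1 ≤ w ∧ w ≤ r) (h : arr r v w) :
    jz r v - jz r w = 1 ∨ jz r w - jz r v = 1 := by
  rcases h with ⟨m, hm, -, ⟨rfl, rfl⟩ | ⟨rfl, rfl⟩⟩ |
      ⟨m, m', hm, -, -, hadj, ⟨rfl, rfl⟩ | ⟨rfl, rfl⟩ | ⟨rfl, rfl⟩⟩
  all_goals first | exact hadj | omega | simp only [jz] at *; omega

lemma bmat_eq_zero_of_not_adjacent {v w : ℤ} (hv : 1 ≤ v ∧ v ≤ r) (hw : 1 ≤ w ∧ w ≤ r)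
    (hvw : jz r v - jz r w ≠ 1) (hwv : jz r w - jz r v ≠ 1) : bmat r v w = 0 := by
  have h : ¬ arr r v w := fun h => (arr_adjacent hv hw h).elim hvw hwv
  have h' : ¬ arr r w v := fun h => (arr_adjacent hw hv h).elim hwv hvw
  simp [bmat, h, h']

lemma mem_cons_muList {k l : ℕ} {j : ℤ} (hj : j ∈ ((k + l + 1 : ℕ) : ℤ) :: muList r k l) :
    (k ≤ j ∧ j ≤ k + l + 1) ∨
      ((k : ℤ) - (r / 2 : ℕ) ≤ j ∧ j ≤ (k : ℤ) - (r / 2 : ℕ) + l) := by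
  simp only [muList, List.mem_cons, List.mem_flatten, List.mem_map, List.mem_reverse,
    List.mem_range] at hj
  rcases hj with rfl | ⟨_, ⟨t, ht, rfl⟩, hj⟩
  · push_cast; omega
  · simp only [List.mem_cons, List.not_mem_nil, or_false] at hj
    omega

/-- Vertex `k+l+2` lies in the even half `j_m ∈ {2,4,…}` of the word, so its letter differs by
an even number from those of the vertices `k,…,k+l+1`, and by at least `3` from those of the
odd-half vertices `k-⌊r/2⌋,…,k-⌊r/2⌋+l`. -/
lemma bmat_cons_muList_eq_zero {k l : ℕ} (hk : (r + 1) / 2 + 1 ≤ k) (hl : k + l + 2 ≤ r)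
    {j : ℤ} (hj : j ∈ ((k + l + 1 : ℕ) : ℤ) :: muList r k l) :
    bmat r j ((k + l + 2 : ℕ) : ℤ) = 0 ∧ j ≠ ((k + l + 2 : ℕ) : ℤ) := by
  have hm := jz_of_lt (r := r) (j := ((k + l + 2 : ℕ) : ℤ)) (by omega) (by omega)
  rcases mem_cons_muList hj with hj | hj
  · have := jz_of_lt (r := r) (j := j) (by omega) (by omega)
    exact ⟨bmat_eq_zero_of_not_adjacent (by omega) (by omega) (by omega) (by omega), by omega⟩
  · have := jz_of_le (r := r) (j := j) (by omega) (by omega)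
    exact ⟨bmat_eq_zero_of_not_adjacent (by omega) (by omega) (by omega) (by omega), by omega⟩

end Quiver

theorem statement10_general (r : ℕ) (k l : ℕ)
    (hk1 : (r + 1) / 2 + 1 ≤ k) (hl : k + l + 2 ≤ r) :
    cvar r (((k + l + 2 : ℕ) : ℤ) :: ((k + l + 1 : ℕ) : ℤ) :: muList r k l)
        ((k + l + 2 : ℕ) : ℤ) =
      cvar r [((k + l + 2 : ℕ) : ℤ)] ((k + l + 2 : ℕ) : ℤ) :=
  mutate_mutSeq_fst_self (initSeed r) fun _ hj => bmat_cons_muList_eq_zero hk1 hl hj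

/-- the cluster variable at vertex `k+l+2` produced after the mutation
sequence `μ_{k+l+1} μ[l]` coincides with the one produced by a single mutation of the
initial seed at vertex `k+l+2`. -/
theorem statement10 (r : ℕ) (hr : 3 ≤ r) (k l : ℕ)
    (hk1 : (r + 1) / 2 + 1 ≤ k) (hk2 : k + 1 ≤ r) (hl : k + l + 2 ≤ r) :
    cvar r (((k + l + 2 : ℕ) : ℤ) :: ((k + l + 1 : ℕ) : ℤ) :: muList r k l)
        ((k + l + 2 : ℕ) : ℤ) =
      cvar r [((k + l + 2 : ℕ) : ℤ)] ((k + l + 2 : ℕ) : ℤ) :=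
  statement10_general r k l hk1 hl

end DBC
end

section
/- Let k ∈ {⌊(r+1)/2⌋+1,…,r−1}, l ∈ {0,…,r−k−1}, p ≥ 0, and (𝐛,𝐜) ∈ R^p_{l−1} (for p = 0 take the empty pair, with all products over i empty and [𝐛,𝐜] = ∅; for l = 0 only p = 0 occurs). Set H_1 = (∏_{t=0}^{l−1}Y_{1,j_k−2t−2})·(∏_{t=0}^{l}Y_{2,j_k−2t−1}) and H_1[𝐛,𝐜] = H_1·∏_{i=1}^{p}A[b_i,c_i;j_k], and let q_1 < q_2 < ⋯ < q_m be the elements of {0,…,l−1}∖[𝐛,𝐜]. Then the set 𝔇(𝐛,𝐜) = { f̃_{j_k−2q_1−2}^{c′_1} f̃_{j_k−2q_2−2}^{c′_2} ⋯ f̃_{j_k−2q_m−2}^{c′_m} (H_1[𝐛,𝐜]) : c′_1,…,c′_m ∈ ℤ_{≥0} } ∖ {0} is finite, its elements are pairwise distinct Laurent monomials, and one has the Laurent polynomial identity H_1[𝐛,𝐜] · ∏_{q∈{0,…,l−1}∖[𝐛,𝐜]}(1+A_{1,j_k−2q−2}^{−1}) = Σ_{M ∈ 𝔇(𝐛,𝐜)}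 M. (𝔇(𝐛,𝐜) is the monomial realization of the Demazure crystal B((Σ_{s=j_k−2l−1}^{j_k−1}Λ_s) − α[𝐛,𝐜;j_k])_{w} for w = ∏_{q∈{0,…,l−1}∖[𝐛,𝐜]} s_{j_k−2q−2}, with highest weight vector realized by H_1[𝐛,𝐜]; combined with the mutation formula for (φ^G_{μ[l]𝕍})_{k−⌊r/2⌋+l}, this expresses that cluster variable as the total sum of monomials of a direct sum of Demazure crystals.) -/
open scoped BigOperators

namespace DBC

variable {R : Type _}

/-! ### Exponent vectors for Statement 19 -/

noncomputable def YexpMz (r : ℕ) (s : ℤ) (j : ℤ) : Mon r :=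
  if 0 ≤ j then YexpM r s j.toNat else 0

/-- The exponent vector of `A_{1,j}` (`0` out of range, i.e. `A_{1,j} = 1`). -/
noncomputable def AexpMz (r : ℕ) (j : ℤ) : Mon r :=
  if 1 ≤ j ∧ j ≤ (r : ℤ) then AexpM r 1 j.toNat else 0

/-- The exponent vector of `A[b,c;x]`. -/
noncomputable def AbrExpM (r : ℕ) (b c x : ℤ) : Mon r :=
  -(∑ s ∈ Finset.Ico b c, (AexpMz r (x - 2 * s - 2) + AexpMz r (x - 2 * s - 3)))
    - AexpMz r (x - 2 * c - 2)

/-- The exponent vector of the monomial `H_1`. -/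
noncomputable def H1Exp (r k l : ℕ) : Mon r :=
  (∑ t ∈ Finset.range l, YexpMz r 1 ((jIdx r k : ℤ) - 2 * t - 2)) +
    (∑ t ∈ Finset.range (l + 1), YexpMz r 2 ((jIdx r k : ℤ) - 2 * t - 1))

/-- The exponent vector of the monomial `H_1[𝐛,𝐜] = H_1 ⋅ ∏ᵢ A[bᵢ,cᵢ;j_k]`. -/
noncomputable def H1bcExp (r k l : ℕ) (p : ℕ) (b c : Fin p → ℤ) : Mon r :=
  H1Exp r k l + ∑ i, AbrExpM r (b i) (c i) (jIdx r k)

/-- The set `𝔇(𝐛,𝐜) = { f̃_{j_k-2q_1-2}^{c′_1} ⋯ f̃_{j_k-2q_m-2}^{c′_m} (H_1[𝐛,𝐜]) } ∖ {0}`,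
where `q_1 < ⋯ < q_m` are the elements of `{0,…,l-1} ∖ [𝐛,𝐜]`
(the innermost operator `f̃_{j_k-2q_m-2}` is applied first). -/
noncomputable def Dem19 (r k l : ℕ) (p : ℕ) (b c : Fin p → ℤ) : Set (Mon r) :=
  { M | ∃ c' : ℕ → ℕ,
      (((((Finset.range l).filter fun q : ℕ => ¬ inBC p b c ((q : ℕ) : ℤ)).sort (· ≤ ·)).reverse).foldl
        (fun x q => (ftil r (jIdx r k - 2 * q - 2))^[c' q] x)
        (some (H1bcExp r k l p b c))) = some M }


/-!
Let `Q = {0,…,l-1} ∖ [𝐛,𝐜]` and, for `S ⊆ Q`, `M_S = H_1[𝐛,𝐜] ⋅ ∏_{q ∈ S} A_{1,j_k-2q-2}^{-1}`.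
For `q ∈ Q` and `i = j_k - 2q - 2`, the only `Y_{·,i}` occurring in `M_S` is `Y_{1,i}` if `q ∉ S`
and `Y_{2,i}^{-1}` if `q ∈ S`: every other factor lives in columns at distance at least `2`
from `i`, by parity or because `q` lies outside `[𝐛,𝐜]`. Hence `f̃_i M_S = M_{S ∪ {q}}` in the
first case and `f̃_i M_S = 0` in the second, so `𝔇(𝐛,𝐜) = {M_S : S ⊆ Q}`; the `M_S` are
distinguished by their `Y_{2,i}`-exponents, and expanding the product gives `Σ_S M_S`.
-/

end DBC

theorem AddMonoidAlgebra.single_mul_prod_one_add_single {k G ι : Type*} [CommSemiring k]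
    [AddCommMonoid G] (x : G) (s : Finset ι) (a : ι → G) :
    single x (1 : k) * ∏ i ∈ s, (1 + single (a i) 1) =
      ∑ t ∈ s.powerset, single (x + ∑ i ∈ t, a i) 1 := by
  simp only [Finset.prod_one_add, Finset.mul_sum, AddMonoidAlgebra.prod_single,
    Finset.prod_const_one, AddMonoidAlgebra.single_mul_single, mul_one]

section IteratedOperators

variable {α ι : Type*} (f : ι → Option α → Option α)

theorem List.foldl_iterate_none (hf : ∀ q, f q none = none) (c : ι → ℕ) (L : List ι) :
    L.foldl (fun x q => (f q)^[c q] x) none = none := by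
  induction L with
  | nil => rfl
  | cons q L ih => rw [List.foldl_cons, Function.iterate_fixed (hf q), ih]

theorem List.foldl_iterate_some_eq [DecidableEq ι] (hf : ∀ q, f q none = none)
    (m : Finset ι → α) (L : List ι) (hL : L.Nodup)
    (hstep : ∀ q ∈ L, ∀ S, f q (some (m S)) = if q ∈ S then none else some (m (insert q S)))
    (c : ι → ℕ) (S : Finset ι) (hS : ∀ q ∈ L, q ∉ S) :
    L.foldl (fun x q => (f q)^[c q] x) (some (m S)) =
      if ∀ q ∈ L, c q ≤ 1 then some (m (S ∪ L.toFinset.filter (c · = 1))) else none := by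
  induction L generalizing S with
  | nil => simp
  | cons q L ih =>
    obtain ⟨hqL, hL⟩ := List.nodup_cons.1 hL
    have hqS : q ∉ S := hS q List.mem_cons_self
    have ih' := ih hL (fun q' hq' => hstep q' (List.mem_cons_of_mem q hq'))
    rw [List.foldl_cons]
    obtain hc | hc | hc : c q = 0 ∨ c q = 1 ∨ 2 ≤ c q := by omega
    · rw [hc, Function.iterate_zero_apply,
        ih' S fun q' hq' => hS q' (List.mem_cons_of_mem q hq')]
      simp [hc, Finset.filter_insert]
    · have hS' : ∀ q' ∈ L, q' ∉ insert q S := fun q' hq' h =>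
        (Finset.mem_insert.1 h).elim (fun h => hqL (h ▸ hq')) (hS q' (List.mem_cons_of_mem q hq'))
      rw [hc, Function.iterate_one, hstep q List.mem_cons_self, if_neg hqS, ih' _ hS']
      simp [hc, Finset.filter_insert, Finset.insert_union, Finset.union_insert]
    · obtain ⟨n, hn⟩ := Nat.exists_eq_add_of_le' hc
      have hkill : (f q)^[2] (some (m S)) = none := by
        rw [Function.iterate_succ_apply, Function.iterate_one, hstep q List.mem_cons_self,
          if_neg hqS, hstep q List.mem_cons_self, if_pos (Finset.mem_insert_self q S)]
      rw [hn, Function.iterate_add_apply, hkill, Function.iterate_fixed (hf q),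
        List.foldl_iterate_none f hf, if_neg fun h => by have := h q List.mem_cons_self; omega]

theorem List.setOf_foldl_iterate_eq [DecidableEq ι] [DecidableEq α] (hf : ∀ q, f q none = none)
    (m : Finset ι → α) (L : List ι) (hL : L.Nodup)
    (hstep : ∀ q ∈ L, ∀ S, f q (some (m S)) = if q ∈ S then none else some (m (insert q S))) :
    {M | ∃ c : ι → ℕ, L.foldl (fun x q => (f q)^[c q] x) (some (m ∅)) = some M} =
      ↑(L.toFinset.powerset.image m) := by
  ext M
  simp only [L.foldl_iterate_some_eq f hf m hL hstep _ ∅ (fun _ _ => Finset.notMem_empty _),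
    Finset.empty_union, Set.mem_ofPred_eq, Finset.coe_image, Set.mem_image, Finset.mem_coe,
    Finset.mem_powerset]
  constructor
  · rintro ⟨c, hc⟩
    split_ifs at hc
    exact ⟨_, Finset.filter_subset _ _, Option.some_injective _ hc⟩
  · rintro ⟨T, hT, rfl⟩
    refine ⟨fun q => if q ∈ T then 1 else 0, ?_⟩
    rw [if_pos (fun q _ => by dsimp only; split_ifs <;> omega)]
    congr 2
    ext q
    simp only [Finset.mem_filter, List.mem_toFinset, ite_eq_left_iff, zero_ne_one, imp_false,
      not_not]
    exact ⟨fun h => h.2, fun h => ⟨List.mem_toFinset.1 (hT h), h⟩⟩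

end IteratedOperators

namespace DBC

section Coordinates

variable {r : ℕ}

theorem YexpM_apply (s t : ℤ) (j : ℕ) (y : Fin r) :
    YexpM r s j (t, y) = if s = t ∧ j = (y : ℕ) + 1 then 1 else 0 := by
  have hy := y.isLt
  unfold YexpM
  by_cases h : 1 ≤ j ∧ j ≤ r
  · rw [dif_pos h, Finsupp.single_apply]
    simp only [Prod.mk.injEq, Fin.ext_iff]
    exact if_congr (and_congr_right fun _ => by omega) rfl rfl
  · rw [dif_neg h, if_neg (by omega)]
    rfl

theorem YexpMz_apply (s t z : ℤ) (y : Fin r) :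
    YexpMz r s z (t, y) = if s = t ∧ z = (y : ℕ) + 1 then 1 else 0 := by
  unfold YexpMz
  by_cases h : 0 ≤ z
  · rw [if_pos h, YexpM_apply]
    exact if_congr (and_congr_right fun _ => by omega) rfl rfl
  · rw [if_neg h, if_neg (by omega)]
    rfl

theorem AexpMz_apply_of_eq {z : ℤ} {y : Fin r} (hz : z = (y : ℕ) + 1) (t : ℤ) :
    AexpMz r z (t, y) = (if t = 1 then 1 else 0) + (if t = 2 then 1 else 0) := by
  have hy := y.isLt
  rw [AexpMz, if_pos (by omega), AexpM]
  split_ifs <;> simp only [Finsupp.sub_apply, Finsupp.add_apply, YexpM_apply] <;>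
    split_ifs <;> omega

theorem AexpMz_apply_of_far {z : ℤ} {y : Fin r} (hz : z < (y : ℕ) ∨ (y : ℕ) + 2 < z) (t : ℤ) :
    AexpMz r z (t, y) = 0 := by
  unfold AexpMz
  split_ifs
  · rw [AexpM]
    split_ifs <;> simp only [Finsupp.sub_apply, Finsupp.add_apply, YexpM_apply] <;>
      split_ifs <;> omega
  · rfl

end Coordinates

section KashiwaraOperator

variable {r : ℕ} {M : Mon r} {y : Fin r}

theorem psum_eq_of_column (hcol : ∀ t, t ≠ 1 → t ≠ 2 → M (t, y) = 0) (s : ℤ) :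
    psum r M ((y : ℕ) + 1) s =
      (if 1 ≤ s then M (1, y) else 0) + (if 2 ≤ s then M (2, y) else 0) := by
  have hsub : M.support.filter (fun x => (x.2 : ℕ) + 1 = (y : ℕ) + 1 ∧ x.1 ≤ s) ⊆
      ({(1, y), (2, y)} : Finset (ℤ × Fin r)).filter (·.1 ≤ s) := by
    rintro ⟨t, y'⟩ hx
    simp only [Finset.mem_filter, Finsupp.mem_support_iff, add_left_inj, Fin.val_inj] at hx
    obtain ⟨hM, rfl, hts⟩ := hx
    simp only [Finset.mem_filter, Finset.mem_insert, Finset.mem_singleton, Prod.mk.injEq,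
      and_true]
    by_contra h
    exact hM (hcol t (fun h1 => h ⟨Or.inl h1, hts⟩) (fun h2 => h ⟨Or.inr h2, hts⟩))
  rw [psum, Finset.sum_subset hsub, Finset.sum_filter, Finset.sum_pair (by simp)]
  intro x hx hxn
  by_contra hne
  refine hxn (Finset.mem_filter.2
    ⟨Finsupp.mem_support_iff.2 hne, ?_, (Finset.mem_filter.1 hx).2⟩)
  rcases Finset.mem_insert.1 (Finset.mem_filter.1 hx).1 with rfl | h
  · rfl
  · rw [Finset.mem_singleton.1 h]

theorem phiIM_eq_one (hcol : ∀ t, t ≠ 1 → t ≠ 2 → M (t, y) = 0) (h1 : M (1, y) = 1)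
    (h2 : M (2, y) = 0) : phiIM r M ((y : ℕ) + 1) = 1 := by
  have hps (s : ℤ) : psum r M ((y : ℕ) + 1) s = if 1 ≤ s then 1 else 0 := by
    rw [psum_eq_of_column hcol, h1, h2]
    simp
  refine le_antisymm (Finset.max'_le _ _ _ fun v hv => ?_) (Finset.le_max' _ _ ?_)
  · simp only [Finset.mem_insert, Finset.mem_image] at hv
    rcases hv with rfl | ⟨s, -, rfl⟩
    · norm_num
    · rw [hps]
      split_ifs <;> norm_num
  · refine Finset.mem_insert_of_mem (Finset.mem_image.2 ⟨1, ?_, by rw [hps]; rfl⟩)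
    exact Finset.mem_image.2 ⟨(1, y), by simp [h1], rfl⟩

theorem nfM_eq_one (hcol : ∀ t, t ≠ 1 → t ≠ 2 → M (t, y) = 0) (h1 : M (1, y) = 1)
    (h2 : M (2, y) = 0) : nfM r M ((y : ℕ) + 1) = 1 := by
  have hF : (((M.support.filter fun x => (x.2 : ℕ) + 1 = (y : ℕ) + 1).image Prod.fst).filter
      fun s => psum r M ((y : ℕ) + 1) s = phiIM r M ((y : ℕ) + 1)) = {1} := by
    ext t
    simp only [Finset.mem_filter, Finset.mem_image, Finsupp.mem_support_iff, add_left_inj,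
      Fin.val_inj, Prod.exists, exists_and_right, exists_eq_right, Finset.mem_singleton,
      phiIM_eq_one hcol h1 h2, psum_eq_of_column hcol, h1, h2]
    constructor
    · rintro ⟨hM, -⟩
      by_contra ht1
      exact hM (if ht2 : t = 2 then by rw [ht2, h2] else hcol t ht1 ht2)
    · rintro rfl
      simp [h1]
  rw [nfM, hF, Finset.min_singleton]
  rfl

theorem phiIM_eq_zero (hcol : ∀ t, t ≠ 1 → t ≠ 2 → M (t, y) = 0) (h1 : M (1, y) = 0)
    (h2 : M (2, y) = -1) : phiIM r M ((y : ℕ) + 1) = 0 := by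
  have hps (s : ℤ) : psum r M ((y : ℕ) + 1) s = if 2 ≤ s then -1 else 0 := by
    rw [psum_eq_of_column hcol, h1, h2]
    simp
  refine le_antisymm (Finset.max'_le _ _ _ fun v hv => ?_)
    (Finset.le_max' _ _ (Finset.mem_insert_self _ _))
  simp only [Finset.mem_insert, Finset.mem_image] at hv
  rcases hv with rfl | ⟨s, -, rfl⟩
  · rfl
  · rw [hps]
    split_ifs <;> norm_num

theorem ftil_of_column_eq_one (hcol : ∀ t, t ≠ 1 → t ≠ 2 → M (t, y) = 0) (h1 : M (1, y) = 1)
    (h2 : M (2, y) = 0) :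
    ftil r ((y : ℕ) + 1) (some M) = some (M - AexpM r 1 ((y : ℕ) + 1)) := by
  rw [ftil, if_pos (by rw [phiIM_eq_one hcol h1 h2]; norm_num), nfM_eq_one hcol h1 h2]

theorem ftil_of_column_eq_neg_one (hcol : ∀ t, t ≠ 1 → t ≠ 2 → M (t, y) = 0)
    (h1 : M (1, y) = 0) (h2 : M (2, y) = -1) : ftil r ((y : ℕ) + 1) (some M) = none := by
  rw [ftil, if_neg (by rw [phiIM_eq_zero hcol h1 h2]; norm_num)]

end KashiwaraOperator

def outsideBC (l p : ℕ) (b c : Fin p → ℤ) : Finset ℕ :=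
  (Finset.range l).filter fun q : ℕ => ¬ inBC p b c ((q : ℕ) : ℤ)

noncomputable def H1bcLowered (r k l p : ℕ) (b c : Fin p → ℤ) (S : Finset ℕ) : Mon r :=
  H1bcExp r k l p b c - ∑ q ∈ S, AexpMz r ((jIdx r k : ℤ) - 2 * q - 2)

section LoweredMonomials

variable {r k l p q : ℕ} {b c : Fin p → ℤ} {y : Fin r}

theorem H1Exp_apply (hq : q < l) (hy : ((y : ℕ) : ℤ) + 1 = (jIdx r k : ℤ) - 2 * q - 2)
    (t : ℤ) : H1Exp r k l (t, y) = if t = 1 then 1 else 0 := by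
  rw [H1Exp, Finsupp.add_apply, Finsupp.finsetSum_apply, Finsupp.finsetSum_apply,
    Finset.sum_eq_single_of_mem q (Finset.mem_range.2 hq), Finset.sum_eq_zero, add_zero]
  · rw [YexpMz_apply]
    exact if_congr (by omega) rfl rfl
  · intro x _
    rw [YexpMz_apply, if_neg (by omega)]
  · intro x _ hx
    rw [YexpMz_apply, if_neg (by omega)]

theorem AbrExpM_apply_of_notMem {b' c' : ℤ} (hbc : b' ≤ c') (hq : ¬(b' ≤ q ∧ (q : ℤ) ≤ c'))
    (hy : ((y : ℕ) : ℤ) + 1 = (jIdx r k : ℤ) - 2 * q - 2) (t : ℤ) :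
    AbrExpM r b' c' (jIdx r k) (t, y) = 0 := by
  rw [AbrExpM, Finsupp.sub_apply, Finsupp.neg_apply, Finsupp.finsetSum_apply,
    Finset.sum_eq_zero, AexpMz_apply_of_far (by omega)]
  · simp
  · intro s hs
    have := Finset.mem_Ico.1 hs
    rw [Finsupp.add_apply, AexpMz_apply_of_far (by omega), AexpMz_apply_of_far (by omega),
      add_zero]

theorem sum_AexpMz_apply (hy : ((y : ℕ) : ℤ) + 1 = (jIdx r k : ℤ) - 2 * q - 2)
    (S : Finset ℕ) (t : ℤ) :
    (∑ q' ∈ S, AexpMz r ((jIdx r k : ℤ) - 2 * q' - 2)) (t, y) =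
      if q ∈ S then (if t = 1 then 1 else 0) + (if t = 2 then 1 else 0) else 0 := by
  rw [Finsupp.finsetSum_apply]
  by_cases hqS : q ∈ S
  · rw [if_pos hqS, Finset.sum_eq_single_of_mem q hqS, AexpMz_apply_of_eq (by omega)]
    intro q' _ hq'
    rw [AexpMz_apply_of_far (by omega)]
  · refine (if_neg hqS).symm ▸ Finset.sum_eq_zero fun q' hq' => AexpMz_apply_of_far ?_ t
    have : q' ≠ q := fun h => hqS (h ▸ hq')
    omega

theorem H1bcLowered_apply (hbc : ∀ i, b i ≤ c i) (hq : q < l) (hqbc : ¬ inBC p b c q)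
    (hy : ((y : ℕ) : ℤ) + 1 = (jIdx r k : ℤ) - 2 * q - 2)
    (S : Finset ℕ) (t : ℤ) :
    H1bcLowered r k l p b c S (t, y) = (if t = 1 then 1 else 0) -
      if q ∈ S then (if t = 1 then 1 else 0) + (if t = 2 then 1 else 0) else 0 := by
  have hAbr (i : Fin p) : AbrExpM r (b i) (c i) (jIdx r k) (t, y) = 0 :=
    AbrExpM_apply_of_notMem (hbc i) (fun h => hqbc ⟨i, h⟩) hy t
  rw [H1bcLowered, H1bcExp, Finsupp.sub_apply, Finsupp.add_apply, Finsupp.finsetSum_apply,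
    Finset.sum_eq_zero fun i _ => hAbr i, H1Exp_apply hq hy, sum_AexpMz_apply hy, add_zero]

theorem exists_column_eq (hj : 2 * l + 1 ≤ jIdx r k) (hjr : jIdx r k ≤ r) (hq : q < l) :
    ∃ y : Fin r, ((y : ℕ) : ℤ) + 1 = (jIdx r k : ℤ) - 2 * q - 2 :=
  ⟨⟨jIdx r k - 2 * q - 3, by omega⟩, by simp only; omega⟩

theorem ftil_H1bcLowered (hj : 2 * l + 1 ≤ jIdx r k) (hjr : jIdx r k ≤ r)
    (hbc : ∀ i, b i ≤ c i) (hq : q < l) (hqbc : ¬ inBC p b c q) (S : Finset ℕ) :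
    ftil r (jIdx r k - 2 * q - 2) (some (H1bcLowered r k l p b c S)) =
      if q ∈ S then none else some (H1bcLowered r k l p b c (insert q S)) := by
  obtain ⟨y, hy⟩ := exists_column_eq hj hjr hq
  have hi : jIdx r k - 2 * q - 2 = (y : ℕ) + 1 := by omega
  have hcol := H1bcLowered_apply hbc hq hqbc hy S
  have hrows : ∀ t, t ≠ 1 → t ≠ 2 → H1bcLowered r k l p b c S (t, y) = 0 := fun t h1 h2 => by
    rw [hcol]; simp [h1, h2]
  rw [hi]
  split_ifs with hqS
  · exact ftil_of_column_eq_neg_one hrows (by rw [hcol]; simp [hqS]) (by rw [hcol]; simp [hqS])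
  · rw [ftil_of_column_eq_one hrows (by rw [hcol]; simp [hqS]) (by rw [hcol]; simp [hqS]),
      H1bcLowered, H1bcLowered, Finset.sum_insert hqS, AexpMz, if_pos (by omega), sub_sub,
      add_comm (AexpM _ _ _)]
    congr 4
    omega

theorem H1bcLowered_injOn (hj : 2 * l + 1 ≤ jIdx r k) (hjr : jIdx r k ≤ r)
    (hbc : ∀ i, b i ≤ c i) :
    Set.InjOn (H1bcLowered r k l p b c) ↑(outsideBC l p b c).powerset := by
  intro S hS S' hS' h
  ext q
  by_cases hq : q ∈ outsideBC l p b c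
  · rw [outsideBC, Finset.mem_filter, Finset.mem_range] at hq
    obtain ⟨y, hy⟩ := exists_column_eq hj hjr hq.1
    have h2 := congrArg (· (2, y)) h
    simp only [H1bcLowered_apply hbc hq.1 hq.2 hy] at h2
    by_cases hqS : q ∈ S <;> by_cases hqS' : q ∈ S' <;> simp [hqS, hqS'] at h2 ⊢
  · simp only [Finset.coe_powerset, Set.mem_preimage, Set.mem_powerset_iff, Finset.coe_subset]
      at hS hS'
    exact iff_of_false (fun h => hq (hS h)) (fun h => hq (hS' h))

theorem Dem19_eq_image (hj : 2 * l + 1 ≤ jIdx r k) (hjr : jIdx r k ≤ r)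
    (hbc : ∀ i, b i ≤ c i) :
    Dem19 r k l p b c = ↑((outsideBC l p b c).powerset.image (H1bcLowered r k l p b c)) := by
  have hstep : ∀ q ∈ ((outsideBC l p b c).sort (· ≤ ·)).reverse, ∀ S,
      ftil r (jIdx r k - 2 * q - 2) (some (H1bcLowered r k l p b c S)) =
        if q ∈ S then none else some (H1bcLowered r k l p b c (insert q S)) := by
    intro q hq S
    rw [List.mem_reverse, Finset.mem_sort, outsideBC, Finset.mem_filter, Finset.mem_range] at hq
    exact ftil_H1bcLowered hj hjr hbc hq.1 hq.2 S
  have h := List.setOf_foldl_iterate_eq _ (fun _ => rfl) _ _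
    (List.nodup_reverse.2 (Finset.sort_nodup _ _)) hstep
  rw [List.toFinset_reverse, Finset.sort_toFinset] at h
  rw [← h, Dem19, H1bcLowered, Finset.sum_empty, sub_zero]
  rfl

end LoweredMonomials

theorem jIdx_bounds {r k l : ℕ} (hk : (r + 1) / 2 + 1 ≤ k) (hl : k + l + 1 ≤ r) :
    2 * l + 2 ≤ jIdx r k ∧ jIdx r k ≤ r := by
  unfold jIdx
  simp only
  split_ifs <;> omega

theorem statement19_general (r : ℕ) (k l : ℕ)
    (hk1 : (r + 1) / 2 + 1 ≤ k) (hl : k + l + 1 ≤ r)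
    (p : ℕ) (b c : Fin p → ℤ) (hbc : IsRpair (l - 1) p b c) :
    (Dem19 r k l p b c).Finite ∧
    (AddMonoidAlgebra.single (H1bcExp r k l p b c) (1 : ℤ) *
        ∏ q ∈ Finset.range l,
          (if inBC p b c (q : ℤ) then 1
           else 1 + AddMonoidAlgebra.single (-(AexpMz r (jkz r k - 2 * (q : ℤ) - 2))) (1 : ℤ)) =
      ∑ᶠ M ∈ Dem19 r k l p b c, AddMonoidAlgebra.single M (1 : ℤ)) := by
  obtain ⟨hj, hjr⟩ := jIdx_bounds hk1 hl
  have hj' : 2 * l + 1 ≤ jIdx r k := by omega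
  have hbc' : ∀ i, b i ≤ c i := fun i => (hbc.1 i).le
  have hDem := Dem19_eq_image hj' hjr hbc'
  refine ⟨hDem ▸ Finset.finite_toSet _, ?_⟩
  rw [hDem, finsum_mem_coe_finset, Finset.sum_image (H1bcLowered_injOn hj' hjr hbc')]
  have hprod : ∏ q ∈ Finset.range l, (if inBC p b c (q : ℤ) then 1
        else 1 + AddMonoidAlgebra.single (-(AexpMz r (jkz r k - 2 * (q : ℤ) - 2))) (1 : ℤ)) =
      ∏ q ∈ outsideBC l p b c,
        (1 + AddMonoidAlgebra.single (-(AexpMz r (jkz r k - 2 * (q : ℤ) - 2))) (1 : ℤ)) := by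
    simp only [outsideBC, Finset.prod_filter, ite_not]
  rw [hprod, AddMonoidAlgebra.single_mul_prod_one_add_single]
  refine Finset.sum_congr rfl fun S _ => ?_
  rw [H1bcLowered, Finset.sum_neg_distrib, ← sub_eq_add_neg]
  rfl

/-- the Laurent-polynomial identity
`H_1[𝐛,𝐜] ⋅ ∏_{q ∈ {0,…,l-1}∖[𝐛,𝐜]} (1 + A_{1,j_k-2q-2}^{-1}) = Σ_{M ∈ 𝔇(𝐛,𝐜)} M`,
where `𝔇(𝐛,𝐜)` is the (finite) monomial realization of the Demazure crystal
`B((Σ_{s=j_k-2l-1}^{j_k-1} Λ_s) - α[𝐛,𝐜;j_k])_w`, stated in the group algebra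
`ℤ[Y^{±1}]` of Laurent monomials. -/
theorem statement19 (r : ℕ) (hr : 3 ≤ r) (k l : ℕ)
    (hk1 : (r + 1) / 2 + 1 ≤ k) (hk2 : k + 1 ≤ r) (hl : k + l + 1 ≤ r)
    (p : ℕ) (b c : Fin p → ℤ) (hbc : IsRpair (l - 1) p b c) :
    (Dem19 r k l p b c).Finite ∧
    (AddMonoidAlgebra.single (H1bcExp r k l p b c) (1 : ℤ) *
        ∏ q ∈ Finset.range l,
          (if inBC p b c (q : ℤ) then 1
           else 1 + AddMonoidAlgebra.single (-(AexpMz r (jkz r k - 2 * (q : ℤ) - 2))) (1 : ℤ)) =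
      ∑ᶠ M ∈ Dem19 r k l p b c, AddMonoidAlgebra.single M (1 : ℤ)) :=
  statement19_general r k l hk1 hl p b c hbc

end DBC
end
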